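/- arXiv:1507.04813 — 3 statements merged into one kernel-verified Lean document; each statement's English description precedes it below -/
import Mathlib

section
/- Let the compact set A and lower semicontinuous kernel K satisfy assumptions (A1)-(A4). For each N ≥ 2 choose a configuration ω_N ∈ A^N and let ν_N be the probability measure assigning mass 1/N to each point of ω_N (counting multiplicities). If the measures ν_N converge weakly to μ_eq as N → ∞, then lim_{N→∞} P(ω_N) = W_K. -/
open MeasureTheory Filter Topology BoundedContinuousFunction NNReal ENNReal

noncomputable section

/-- The potential of a measure `μ` with respect to the kernel `K x y = f (nndist x y)`. -/
def potential {t : ℕ} (f : ℝ≥0 → ℝ≥0∞) (μ : Measure (EuclideanSpace ℝ (Fin t)))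
    (x : EuclideanSpace ℝ (Fin t)) : ℝ≥0∞ :=
  ∫⁻ y, f (nndist x y) ∂μ

/-- The energy `I[μ] = ∫∫ K(x,y) dμ(x) dμ(y)`. -/
def energy {t : ℕ} (f : ℝ≥0 → ℝ≥0∞) (μ : Measure (EuclideanSpace ℝ (Fin t))) : ℝ≥0∞ :=
  ∫⁻ x, potential f μ x ∂μ

/-- The normalized discrete potential `(1/N) ∑_{y ∈ ω} K(x,y)` of a configuration. -/
def discretePotential {t : ℕ} (f : ℝ≥0 → ℝ≥0∞) {N : ℕ}
    (ω : Fin N → EuclideanSpace ℝ (Fin t)) (x : EuclideanSpace ℝ (Fin t)) : ℝ≥0∞ :=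
  (N : ℝ≥0∞)⁻¹ * ∑ i, f (nndist x (ω i))

/-- The polarization `P(ω) = min_{x ∈ A} (1/N) ∑_{y ∈ ω} K(x,y)` of a configuration. -/
def polarization {t : ℕ} (f : ℝ≥0 → ℝ≥0∞) (A : Set (EuclideanSpace ℝ (Fin t))) {N : ℕ}
    (ω : Fin N → EuclideanSpace ℝ (Fin t)) : ℝ≥0∞ :=
  ⨅ x ∈ A, discretePotential f ω x

/-- The optimal `N`-point polarization `𝒫(A,N)`. -/
def maxPolarization {t : ℕ} (f : ℝ≥0 → ℝ≥0∞) (A : Set (EuclideanSpace ℝ (Fin t)))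
    (N : ℕ) : ℝ≥0∞ :=
  ⨆ (ω : Fin N → EuclideanSpace ℝ (Fin t)) (_ : ∀ i, ω i ∈ A), polarization f A ω

/-- The normalized counting measure of a configuration. -/
def countingMeasure {t : ℕ} {N : ℕ} (ω : Fin N → EuclideanSpace ℝ (Fin t)) :
    Measure (EuclideanSpace ℝ (Fin t)) :=
  (N : ℝ≥0∞)⁻¹ • ∑ i, Measure.dirac (ω i)

/-- Weak convergence of a sequence of measures: integrals of every bounded continuous
function converge. -/
def WeaklyTendsto {t : ℕ} (ν : ℕ → Measure (EuclideanSpace ℝ (Fin t)))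
    (μ : Measure (EuclideanSpace ℝ (Fin t))) : Prop :=
  ∀ g : EuclideanSpace ℝ (Fin t) →ᵇ ℝ,
    Tendsto (fun N => ∫ x, g x ∂(ν N)) atTop (𝓝 (∫ x, g x ∂μ))


/-!
The upper bound is an averaging argument: integrating the discrete potential of `ω N` against
`μeq` gives the mean of `U^{μeq}` over the points of `ω N`, which is `W`, so its minimum over `A`
is at most `W`.

For the lower bound, a lower semicontinuous `f` is the increasing limit of its bounded
`K`-Lipschitz minorants `f_K r = ⨅ s, min (f s) K + K |r - s|`. By monotone convergence the
`f_K`-potentials of `μeq` increase to `W` on `A`, and being lower semicontinuous they exceed any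
`c < W` uniformly on the compact set `A` for one fixed `K` (Dini). The `f_K`-potentials of the
counting measures converge pointwise by weak convergence, and they are `K`-Lipschitz uniformly in
`N`, so on `A` they eventually exceed `c` as well (a finite net suffices). They are dominated
by the discrete `f`-potentials.
-/

section LipschitzMinorant

variable {α : Type*} [PseudoEMetricSpace α] {f : α → ℝ≥0∞}

def lipschitzMinorant (f : α → ℝ≥0∞) (K : ℕ) (a : α) : ℝ≥0 :=
  (⨅ b, min (f b) K + K * edist a b).toNNReal

theorem coe_lipschitzMinorant (K : ℕ) (a : α) :
    (lipschitzMinorant f K a : ℝ≥0∞) = ⨅ b, min (f b) K + K * edist a b :=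
  ENNReal.coe_toNNReal <| ne_top_of_le_ne_top (ENNReal.natCast_ne_top K) <|
    (iInf_le _ a).trans (by simp)

theorem coe_lipschitzMinorant_le (K : ℕ) (a : α) : (lipschitzMinorant f K a : ℝ≥0∞) ≤ f a := by
  rw [coe_lipschitzMinorant]
  exact (iInf_le _ a).trans (by simp)

theorem lipschitzMinorant_le_natCast (K : ℕ) (a : α) : lipschitzMinorant f K a ≤ K := by
  rw [← ENNReal.coe_le_coe, coe_lipschitzMinorant]
  exact (iInf_le _ a).trans (by simp)

theorem monotone_lipschitzMinorant (a : α) : Monotone fun K => lipschitzMinorant f K a := by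
  intro K K' hK
  rw [← ENNReal.coe_le_coe, coe_lipschitzMinorant, coe_lipschitzMinorant]
  have hK' : (K : ℝ≥0∞) ≤ K' := by exact_mod_cast hK
  gcongr

theorem coe_lipschitzMinorant_le_add_edist (K : ℕ) (a a' : α) :
    (lipschitzMinorant f K a : ℝ≥0∞) ≤ lipschitzMinorant f K a' + K * edist a a' := by
  rw [coe_lipschitzMinorant, coe_lipschitzMinorant, ENNReal.iInf_add]
  refine iInf_mono fun b => ?_
  calc min (f b) K + K * edist a b ≤ min (f b) K + K * (edist a' b + edist a a') := by
        gcongr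
        exact (edist_triangle a a' b).trans_eq (add_comm _ _)
    _ = min (f b) K + K * edist a' b + K * edist a a' := by ring

theorem lipschitzWith_lipschitzMinorant (K : ℕ) : LipschitzWith K (lipschitzMinorant f K) := by
  intro a a'
  rw [edist_nndist, NNReal.nndist_eq, ENNReal.coe_max, max_le_iff, ENNReal.coe_sub,
    ENNReal.coe_sub, tsub_le_iff_left, tsub_le_iff_left, ENNReal.coe_natCast]
  exact ⟨coe_lipschitzMinorant_le_add_edist K a a',
    edist_comm a a' ▸ coe_lipschitzMinorant_le_add_edist K a' a⟩

theorem LowerSemicontinuous.iSup_coe_lipschitzMinorant (hf : LowerSemicontinuous f) (a : α) :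
    ⨆ K, (lipschitzMinorant f K a : ℝ≥0∞) = f a := by
  refine le_antisymm (iSup_le fun K => coe_lipschitzMinorant_le K a)
    (le_of_forall_lt_imp_le_of_dense fun c hc => ?_)
  obtain ⟨ε, hε, hball⟩ := EMetric.mem_nhds_iff.1 (hf a c hc)
  have hc_top : c ≠ ⊤ := ne_top_of_lt hc
  obtain ⟨K, hK⟩ := ENNReal.exists_nat_gt (max_ne_top hc_top (ENNReal.div_ne_top hc_top hε.ne'))
  rw [max_lt_iff] at hK
  -- Near `a`, `c < f b`; away from `a`, the penalty `K * edist a b` already exceeds `c`.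
  have hfar : c ≤ K * ε :=
    (ENNReal.div_le_iff_le_mul (.inl hε.ne') (.inr (pos_of_gt hK.2).ne')).1 hK.2.le
  refine le_iSup_of_le K ?_
  rw [coe_lipschitzMinorant]
  refine le_iInf fun b => ?_
  by_cases hb : edist b a < ε
  · exact (le_min (hball hb).le hK.1.le).trans le_self_add
  · calc c ≤ K * ε := hfar
      _ ≤ K * edist a b := by rw [edist_comm]; gcongr; exact not_lt.1 hb
      _ ≤ _ := le_add_self

end LipschitzMinorant

section Kernel

variable {X : Type*} [PseudoMetricSpace X] {f : ℝ≥0 → ℝ≥0∞}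

theorem continuous_lipschitzMinorant_nndist (K : ℕ) (x : X) :
    Continuous fun y => lipschitzMinorant f K (nndist x y) :=
  (lipschitzWith_lipschitzMinorant K).continuous.comp (continuous_const.nndist continuous_id)

variable [MeasurableSpace X]

theorem lintegral_lipschitzMinorant_le_add_edist {m : Measure X} (hm : m Set.univ ≤ 1) (K : ℕ)
    (x x' : X) :
    ∫⁻ y, lipschitzMinorant f K (nndist x y) ∂m ≤
      ∫⁻ y, lipschitzMinorant f K (nndist x' y) ∂m + K * edist x x' := by
  have hdist (y : X) : edist (nndist x y) (nndist x' y) ≤ edist x x' := by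
    rw [edist_dist, edist_dist]
    exact ENNReal.ofReal_le_ofReal (by simpa [NNReal.dist_eq] using abs_dist_sub_le x x' y)
  calc ∫⁻ y, lipschitzMinorant f K (nndist x y) ∂m
      ≤ ∫⁻ y, (lipschitzMinorant f K (nndist x' y) + K * edist x x' : ℝ≥0∞) ∂m :=
        lintegral_mono fun y => (coe_lipschitzMinorant_le_add_edist K _ _).trans (by
          gcongr; exact hdist y)
    _ = ∫⁻ y, lipschitzMinorant f K (nndist x' y) ∂m + K * edist x x' * m Set.univ := by
        rw [lintegral_add_right _ measurable_const, lintegral_const]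
    _ ≤ ∫⁻ y, lipschitzMinorant f K (nndist x' y) ∂m + K * edist x x' :=
        add_le_add_right (mul_le_of_le_one_right' hm) _

theorem LowerSemicontinuous.iSup_lintegral_lipschitzMinorant [OpensMeasurableSpace X]
    (hf : LowerSemicontinuous f) (m : Measure X) (x : X) :
    ⨆ K, ∫⁻ y, lipschitzMinorant f K (nndist x y) ∂m = ∫⁻ y, f (nndist x y) ∂m := by
  rw [← lintegral_iSup (f := fun K y => (lipschitzMinorant f K (nndist x y) : ℝ≥0∞))
    (fun K => (ENNReal.continuous_coe.comp (continuous_lipschitzMinorant_nndist K x)).measurable)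
    (fun K K' hK y => ENNReal.coe_le_coe.2 (monotone_lipschitzMinorant _ hK))]
  simp_rw [hf.iSup_coe_lipschitzMinorant]

end Kernel

theorem lowerSemicontinuous_of_le_add_mul_edist {X : Type*} [PseudoEMetricSpace X]
    {u : X → ℝ≥0∞} {L : ℝ≥0∞} (hL : L ≠ ⊤) (hu : ∀ x x', u x ≤ u x' + L * edist x x') :
    LowerSemicontinuous u := by
  intro x c hc
  obtain ⟨d, hcd, hd⟩ := exists_between hc
  have hsmall : Tendsto (fun x' => L * edist x x') (𝓝 x) (𝓝 0) := by
    simpa using ENNReal.Tendsto.const_mul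
      (((continuous_const (y := x)).edist continuous_id).tendsto x) (.inr hL)
  filter_upwards [hsmall.eventually (gt_mem_nhds (tsub_pos_of_lt hcd))] with x' hx'
  by_contra! hx'c
  have : u x < d :=
    calc u x ≤ u x' + L * edist x x' := hu x x'
      _ ≤ c + L * edist x x' := by gcongr
      _ < c + (d - c) := ENNReal.add_lt_add_left (ne_top_of_lt hcd) hx'
      _ = d := add_tsub_cancel_of_le hcd.le
  exact lt_asymm hd this

theorem IsCompact.exists_forall_lt_of_lt_iSup {X ι β : Type*} [TopologicalSpace X] [Preorder ι]
    [IsDirectedOrder ι] [Nonempty ι] [CompleteLinearOrder β] {A : Set X} (hA : IsCompact A)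
    {u : ι → X → β} (hmono : Monotone u) (hlsc : ∀ i, LowerSemicontinuous (u i)) {c : β}
    (hc : ∀ x ∈ A, c < ⨆ i, u i x) : ∃ i, ∀ x ∈ A, c < u i x :=
  hA.elim_directed_cover (fun i => {x | c < u i x}) (fun i => (hlsc i).isOpen_preimage c)
    (fun x hx => Set.mem_iUnion.2 (lt_iSup_iff.1 (hc x hx)))
    (Monotone.directed_le fun _ _ hij _ hx => hx.trans_le (hmono hij _))

theorem IsCompact.eventually_forall_lt_of_tendsto {X ι : Type*} [PseudoEMetricSpace X]
    {l : Filter ι} {A : Set X} (hA : IsCompact A) {v : ι → X → ℝ≥0∞} {u : X → ℝ≥0∞}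
    {L : ℝ≥0∞} (hL : L ≠ ⊤) (hv : ∀ i x x', v i x ≤ v i x' + L * edist x x')
    (hlim : ∀ x ∈ A, Tendsto (fun i => v i x) l (𝓝 (u x))) {c c' : ℝ≥0∞} (hcc' : c < c')
    (hu : ∀ x ∈ A, c' ≤ u x) : ∀ᶠ i in l, ∀ x ∈ A, c < v i x := by
  obtain ⟨δ, hδ, hcδ⟩ : ∃ δ > 0, c + L * δ < c' := by
    have : Tendsto (fun δ => c + L * δ) (𝓝 0) (𝓝 c) := by
      simpa using (tendsto_const_nhds (x := c)).add
        (ENNReal.Tendsto.const_mul (tendsto_id (x := 𝓝 0)) (.inr hL))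
    exact (this.eventually (gt_mem_nhds hcc')).exists_gt
  obtain ⟨s, hsA, hcover⟩ :=
    hA.elim_nhds_subcover (fun z => Metric.eball z δ) (fun z _ => Metric.eball_mem_nhds z hδ)
  have hnet : ∀ᶠ i in l, ∀ z ∈ s, c + L * δ < v i z :=
    (eventually_all_finset s).2 fun z hz =>
      (hlim z (hsA z hz)).eventually (lt_mem_nhds (hcδ.trans_le (hu z (hsA z hz))))
  filter_upwards [hnet] with i hi x hx
  obtain ⟨z, hz, hxz⟩ := Set.mem_iUnion₂.1 (hcover hx)
  refine (ENNReal.add_lt_add_iff_right (ne_top_of_lt (le_add_self.trans_lt hcδ))).1 ?_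
  calc c + L * δ < v i z := hi z hz
    _ ≤ v i x + L * edist z x := hv i z x
    _ ≤ v i x + L * δ := by gcongr; exact (Metric.mem_eball'.1 hxz).le

section Euclidean

variable {t : ℕ}

theorem lintegral_countingMeasure {N : ℕ} (ω : Fin N → EuclideanSpace ℝ (Fin t))
    (g : EuclideanSpace ℝ (Fin t) → ℝ≥0∞) :
    ∫⁻ y, g y ∂countingMeasure ω = (N : ℝ≥0∞)⁻¹ * ∑ i, g (ω i) := by
  simp [countingMeasure]

theorem countingMeasure_univ_le_one {N : ℕ} (ω : Fin N → EuclideanSpace ℝ (Fin t)) :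
    countingMeasure ω Set.univ ≤ 1 := by
  rw [← lintegral_one, lintegral_countingMeasure]
  simp

instance {N : ℕ} (ω : Fin N → EuclideanSpace ℝ (Fin t)) : IsFiniteMeasure (countingMeasure ω) :=
  ⟨(countingMeasure_univ_le_one ω).trans_lt ENNReal.one_lt_top⟩

theorem discretePotential_eq_lintegral (f : ℝ≥0 → ℝ≥0∞) {N : ℕ}
    (ω : Fin N → EuclideanSpace ℝ (Fin t)) (x : EuclideanSpace ℝ (Fin t)) :
    discretePotential f ω x = ∫⁻ y, f (nndist x y) ∂countingMeasure ω :=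
  (lintegral_countingMeasure ω fun y => f (nndist x y)).symm

theorem WeaklyTendsto.tendsto_lintegral {ν : ℕ → Measure (EuclideanSpace ℝ (Fin t))}
    {μ : Measure (EuclideanSpace ℝ (Fin t))} [∀ N, IsFiniteMeasure (ν N)] [IsFiniteMeasure μ]
    (h : WeaklyTendsto ν μ) (g : EuclideanSpace ℝ (Fin t) →ᵇ ℝ≥0) :
    Tendsto (fun N => ∫⁻ x, g x ∂ν N) atTop (𝓝 (∫⁻ x, g x ∂μ)) :=
  FiniteMeasure.tendsto_iff_forall_lintegral_tendsto.1
    ((FiniteMeasure.tendsto_iff_forall_integral_tendsto (μs := fun N => ⟨ν N, inferInstance⟩)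
      (μ := ⟨μ, inferInstance⟩)).2 h) g

end Euclidean

section Polarization

variable {t : ℕ} {f : ℝ≥0 → ℝ≥0∞} {A : Set (EuclideanSpace ℝ (Fin t))}
  {μ : Measure (EuclideanSpace ℝ (Fin t))}

theorem WeaklyTendsto.tendsto_lintegral_lipschitzMinorant
    {ν : ℕ → Measure (EuclideanSpace ℝ (Fin t))} [∀ N, IsFiniteMeasure (ν N)] [IsFiniteMeasure μ]
    (h : WeaklyTendsto ν μ) (K : ℕ) (x : EuclideanSpace ℝ (Fin t)) :
    Tendsto (fun N => ∫⁻ y, lipschitzMinorant f K (nndist x y) ∂ν N) atTop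
      (𝓝 (∫⁻ y, lipschitzMinorant f K (nndist x y) ∂μ)) := by
  have hbound (r s : ℝ≥0) : dist (lipschitzMinorant f K r) (lipschitzMinorant f K s) ≤ K := by
    have hr : (lipschitzMinorant f K r : ℝ) ≤ K := mod_cast lipschitzMinorant_le_natCast K r
    have hs : (lipschitzMinorant f K s : ℝ) ≤ K := mod_cast lipschitzMinorant_le_natCast K s
    rw [NNReal.dist_eq, abs_sub_le_iff]
    constructor <;> linarith [(lipschitzMinorant f K r).2, (lipschitzMinorant f K s).2]
  exact h.tendsto_lintegral <| .mkOfBound ⟨_, continuous_lipschitzMinorant_nndist K x⟩ K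
    fun y y' => hbound _ _

theorem polarization_le_of_potential_le [IsProbabilityMeasure μ] (hf : Measurable f)
    (hμA : μ Aᶜ = 0) {W : ℝ≥0∞} (hpot : ∀ x ∈ A, potential f μ x ≤ W) {N : ℕ} (hN : N ≠ 0)
    {ω : Fin N → EuclideanSpace ℝ (Fin t)} (hω : ∀ i, ω i ∈ A) : polarization f A ω ≤ W := by
  have hmeas (i : Fin N) : Measurable fun x => f (nndist x (ω i)) :=
    hf.comp (continuous_id.nndist continuous_const).measurable
  calc polarization f A ω = ∫⁻ _, polarization f A ω ∂μ := by simp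
    _ ≤ ∫⁻ x, discretePotential f ω x ∂μ :=
        lintegral_mono_ae ((ae_iff.2 hμA).mono fun x hx => biInf_le _ hx)
    _ = (N : ℝ≥0∞)⁻¹ * ∑ i, potential f μ (ω i) := by
        simp_rw [discretePotential, potential, nndist_comm (ω _)]
        rw [lintegral_const_mul _ (Finset.measurable_sum _ fun i _ => hmeas i),
          lintegral_finsetSum _ fun i _ => hmeas i]
    _ ≤ (N : ℝ≥0∞)⁻¹ * ∑ _i : Fin N, W := by gcongr with i; exact hpot _ (hω i)
    _ = W := by
        rw [Finset.sum_const, Finset.card_univ, Fintype.card_fin, nsmul_eq_mul, ← mul_assoc,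
          ENNReal.inv_mul_cancel (by exact_mod_cast hN) (ENNReal.natCast_ne_top N), one_mul]

theorem eventually_lt_polarization (hA : IsCompact A) (hf : LowerSemicontinuous f)
    [IsProbabilityMeasure μ] {ω : (N : ℕ) → Fin N → EuclideanSpace ℝ (Fin t)}
    (hconv : WeaklyTendsto (fun N => countingMeasure (ω N)) μ) {a b : ℝ≥0∞} (hab : a < b)
    (hb : ∀ x ∈ A, b ≤ potential f μ x) : ∀ᶠ N in atTop, a < polarization f A (ω N) := by
  obtain ⟨c, hac, hcb⟩ := exists_between hab
  obtain ⟨c', hcc', hc'b⟩ := exists_between hcb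
  obtain ⟨K, hK⟩ := hA.exists_forall_lt_of_lt_iSup
    (u := fun K x => ∫⁻ y, lipschitzMinorant f K (nndist x y) ∂μ)
    (fun K K' hK x => lintegral_mono fun y =>
      ENNReal.coe_le_coe.2 (monotone_lipschitzMinorant _ hK))
    (fun K => lowerSemicontinuous_of_le_add_mul_edist (ENNReal.natCast_ne_top K)
      (lintegral_lipschitzMinorant_le_add_edist prob_le_one K))
    (fun x hx =>
      hc'b.trans_le ((hb x hx).trans_eq (hf.iSup_lintegral_lipschitzMinorant μ x).symm))
  have hnet := hA.eventually_forall_lt_of_tendsto (ENNReal.natCast_ne_top K)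
    (fun N => lintegral_lipschitzMinorant_le_add_edist (countingMeasure_univ_le_one (ω N)) K)
    (fun x _ => hconv.tendsto_lintegral_lipschitzMinorant K x) hcc' (fun x hx => (hK x hx).le)
  filter_upwards [hnet] with N hN
  refine hac.trans_le (le_iInf₂ fun x hx => (hN x hx).le.trans ?_)
  rw [discretePotential_eq_lintegral]
  exact lintegral_mono fun y => coe_lipschitzMinorant_le K _

end Polarization

theorem weak_convergence_implies_polarization_limit_general
    {t : ℕ} (A : Set (EuclideanSpace ℝ (Fin t))) (hA : IsCompact A)
    (f : ℝ≥0 → ℝ≥0∞) (hf : LowerSemicontinuous f)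
    (μeq : Measure (EuclideanSpace ℝ (Fin t))) (hμeq : IsProbabilityMeasure μeq)
    (hμeqA : μeq Aᶜ = 0)
    (W : ℝ≥0∞) (hA4 : ∀ x ∈ A, potential f μeq x = W)
    (ω : (N : ℕ) → Fin N → EuclideanSpace ℝ (Fin t)) (hω : ∀ N, ∀ i, ω N i ∈ A)
    (hconv : WeaklyTendsto (fun N => countingMeasure (ω N)) μeq) :
    Tendsto (fun N => polarization f A (ω N)) atTop (𝓝 W) := by
  refine tendsto_order.2 ⟨fun a ha => ?_, fun b hb => ?_⟩
  · exact eventually_lt_polarization hA hf hconv ha fun x hx => (hA4 x hx).ge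
  · filter_upwards [eventually_ne_atTop 0] with N hN
    exact (polarization_le_of_potential_le hf.measurable hμeqA (fun x hx => (hA4 x hx).le) hN
      (hω N)).trans_lt hb

theorem weak_convergence_implies_polarization_limit
    {t : ℕ} (A : Set (EuclideanSpace ℝ (Fin t))) (hA : IsCompact A)
    (f : ℝ≥0 → ℝ≥0∞) (hf : LowerSemicontinuous f)
    (μeq : Measure (EuclideanSpace ℝ (Fin t))) (hμeq : IsProbabilityMeasure μeq)
    (hμeqA : μeq Aᶜ = 0)
    (hA1 : ∃ μ : Measure (EuclideanSpace ℝ (Fin t)),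
      IsProbabilityMeasure μ ∧ μ Aᶜ = 0 ∧ energy f μ < ⊤)
    (hA2min : ∀ ν : Measure (EuclideanSpace ℝ (Fin t)),
      IsProbabilityMeasure ν → ν Aᶜ = 0 → energy f μeq ≤ energy f ν)
    (hA2uniq : ∀ ν : Measure (EuclideanSpace ℝ (Fin t)),
      IsProbabilityMeasure ν → ν Aᶜ = 0 → energy f ν = energy f μeq → ν = μeq)
    (hA3 : ∀ x ∈ A, ∀ U : Set (EuclideanSpace ℝ (Fin t)), IsOpen U → x ∈ U → 0 < μeq U)
    (W : ℝ≥0∞) (hW : 0 < W) (hA4 : ∀ x ∈ A, potential f μeq x = W)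
    (ω : (N : ℕ) → Fin N → EuclideanSpace ℝ (Fin t)) (hω : ∀ N, ∀ i, ω N i ∈ A)
    (hconv : WeaklyTendsto (fun N => countingMeasure (ω N)) μeq) :
    Tendsto (fun N => polarization f A (ω N)) atTop (𝓝 W) :=
  weak_convergence_implies_polarization_limit_general A hA f hf μeq hμeq hμeqA W hA4 ω hω hconv
end
end

section
/- Let the compact set A and lower semicontinuous kernel K satisfy assumptions (A1), (A2), and (A4) (assumption (A3) is not needed). For each N ≥ 2 choose a configuration ω_N ∈ A^N. If lim_{N→∞} P(ω_N) = W_K, then ∫_A | (1/N)·Σ_{y∈ω_N} K(x,y) − P(ω_N) | dμ_eq(x) → 0 as N → ∞; that is, the functions x ↦ (1/N)·Σ_{y∈ω_N} K(x,y) − P(ω_N) converge to 0 in L¹(μ_eq). -/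
open MeasureTheory Filter Topology BoundedContinuousFunction NNReal ENNReal

noncomputable section

/-! Since `U^{μeq} = W` on `A` and every point of `ω_N` lies in `A`, integrating the discrete
potential against `μeq` gives exactly `W`. As the discrete potential dominates `P(ω_N)` on `A`,
the `L¹(μeq)` norm of their difference is `W - P(ω_N)`, which tends to `0`; the finiteness of `W`
needed for this subtraction comes from `I[μeq] = W ≤ I[μ] < ∞`. -/

section

variable {t : ℕ} {f : ℝ≥0 → ℝ≥0∞} {A : Set (EuclideanSpace ℝ (Fin t))}
  {μ : Measure (EuclideanSpace ℝ (Fin t))}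

theorem energy_eq_of_potential_eq [IsProbabilityMeasure μ] (hμA : μ Aᶜ = 0) {W : ℝ≥0∞}
    (hpot : ∀ x ∈ A, potential f μ x = W) : energy f μ = W := by
  rw [energy, lintegral_congr_ae ((ae_iff.2 hμA).mono hpot), lintegral_const, measure_univ,
    mul_one]

theorem lintegral_discretePotential (hf : Measurable f) {N : ℕ}
    (ω : Fin N → EuclideanSpace ℝ (Fin t)) :
    ∫⁻ x, discretePotential f ω x ∂μ = (N : ℝ≥0∞)⁻¹ * ∑ i, potential f μ (ω i) := by
  have hmeas (y : EuclideanSpace ℝ (Fin t)) : Measurable fun x => f (nndist x y) :=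
    hf.comp (continuous_id.nndist continuous_const).measurable
  simp only [discretePotential, potential, nndist_comm (ω _)]
  rw [lintegral_const_mul _ (Finset.measurable_sum _ fun i _ => hmeas (ω i)),
    lintegral_finsetSum _ fun i _ => hmeas (ω i)]

theorem lintegral_discretePotential_of_potential_eq (hf : Measurable f) {N : ℕ} (hN : N ≠ 0)
    {ω : Fin N → EuclideanSpace ℝ (Fin t)} {W : ℝ≥0∞} (hpot : ∀ i, potential f μ (ω i) = W) :
    ∫⁻ x, discretePotential f ω x ∂μ = W := by
  rw [lintegral_discretePotential hf, Finset.sum_congr rfl fun i _ => hpot i, Finset.sum_const,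
    Finset.card_univ, Fintype.card_fin, nsmul_eq_mul, ← mul_assoc,
    ENNReal.inv_mul_cancel (Nat.cast_ne_zero.2 hN) (ENNReal.natCast_ne_top N), one_mul]

theorem lintegral_discretePotential_sub_polarization [IsProbabilityMeasure μ]
    (hf : Measurable f) (hμA : μ Aᶜ = 0) {W : ℝ≥0∞} (hpot : ∀ x ∈ A, potential f μ x = W)
    {N : ℕ} (hN : N ≠ 0) {ω : Fin N → EuclideanSpace ℝ (Fin t)} (hω : ∀ i, ω i ∈ A)
    (hP : polarization f A ω ≠ ⊤) :
    ∫⁻ x, discretePotential f ω x - polarization f A ω ∂μ = W - polarization f A ω := by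
  have hle : ∀ᵐ x ∂μ, polarization f A ω ≤ discretePotential f ω x :=
    (ae_iff.2 hμA).mono fun x hx => biInf_le _ hx
  rw [lintegral_sub measurable_const (by simpa using hP) hle,
    lintegral_discretePotential_of_potential_eq hf hN fun i => hpot _ (hω i), lintegral_const,
    measure_univ, mul_one]

end

theorem polarization_limit_implies_L1_convergence_general
    {t : ℕ} (A : Set (EuclideanSpace ℝ (Fin t)))
    (f : ℝ≥0 → ℝ≥0∞) (hf : LowerSemicontinuous f)
    (μeq : Measure (EuclideanSpace ℝ (Fin t))) (hμeq : IsProbabilityMeasure μeq)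
    (hμeqA : μeq Aᶜ = 0)
    (hA1 : ∃ μ : Measure (EuclideanSpace ℝ (Fin t)),
      IsProbabilityMeasure μ ∧ μ Aᶜ = 0 ∧ energy f μ < ⊤)
    (hA2min : ∀ ν : Measure (EuclideanSpace ℝ (Fin t)),
      IsProbabilityMeasure ν → ν Aᶜ = 0 → energy f μeq ≤ energy f ν)
    (W : ℝ≥0∞) (hA4 : ∀ x ∈ A, potential f μeq x = W)
    (ω : (N : ℕ) → Fin N → EuclideanSpace ℝ (Fin t)) (hω : ∀ N, ∀ i, ω N i ∈ A)
    (hpol : Tendsto (fun N => polarization f A (ω N)) atTop (𝓝 W)) :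
    Tendsto (fun N => ∫⁻ x, (discretePotential f (ω N) x - polarization f A (ω N)) ∂μeq)
      atTop (𝓝 0) := by
  have hW_ne_top : W ≠ ⊤ := by
    obtain ⟨μ, hμ, hμA, hμE⟩ := hA1
    rw [← energy_eq_of_potential_eq hμeqA hA4]
    exact ((hA2min μ hμ hμA).trans_lt hμE).ne
  have hdeviation : ∀ᶠ N in atTop,
      ∫⁻ x, (discretePotential f (ω N) x - polarization f A (ω N)) ∂μeq
        = W - polarization f A (ω N) := by
    filter_upwards [hpol.eventually_ne hW_ne_top, eventually_ne_atTop 0] with N hP hN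
    exact lintegral_discretePotential_sub_polarization hf.measurable hμeqA hA4 hN (hω N) hP
  rw [tendsto_congr' hdeviation, ← tsub_self W]
  exact ENNReal.Tendsto.sub tendsto_const_nhds hpol (Or.inl hW_ne_top)

theorem polarization_limit_implies_L1_convergence
    {t : ℕ} (A : Set (EuclideanSpace ℝ (Fin t))) (hA : IsCompact A)
    (f : ℝ≥0 → ℝ≥0∞) (hf : LowerSemicontinuous f)
    (μeq : Measure (EuclideanSpace ℝ (Fin t))) (hμeq : IsProbabilityMeasure μeq)
    (hμeqA : μeq Aᶜ = 0)
    (hA1 : ∃ μ : Measure (EuclideanSpace ℝ (Fin t)),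
      IsProbabilityMeasure μ ∧ μ Aᶜ = 0 ∧ energy f μ < ⊤)
    (hA2min : ∀ ν : Measure (EuclideanSpace ℝ (Fin t)),
      IsProbabilityMeasure ν → ν Aᶜ = 0 → energy f μeq ≤ energy f ν)
    (hA2uniq : ∀ ν : Measure (EuclideanSpace ℝ (Fin t)),
      IsProbabilityMeasure ν → ν Aᶜ = 0 → energy f ν = energy f μeq → ν = μeq)
    (W : ℝ≥0∞) (hW : 0 < W) (hA4 : ∀ x ∈ A, potential f μeq x = W)
    (ω : (N : ℕ) → Fin N → EuclideanSpace ℝ (Fin t)) (hω : ∀ N, ∀ i, ω N i ∈ A)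
    (hpol : Tendsto (fun N => polarization f A (ω N)) atTop (𝓝 W)) :
    Tendsto (fun N => ∫⁻ x, (discretePotential f (ω N) x - polarization f A (ω N)) ∂μeq)
      atTop (𝓝 0) :=
  polarization_limit_implies_L1_convergence_general A f hf μeq hμeq hμeqA hA1 hA2min W hA4 ω hω hpol
end
end

section
/- Let the compact set A and lower semicontinuous kernel K satisfy assumptions (A1)-(A4). Then μ_eq is the unique polarization extremal measure: sup over all probability measures μ on A of min_{x∈A} U^μ(x) equals W_K, and any probability measure μ_p on A with min_{x∈A} U^{μ_p}(x) = W_K must equal μ_eq. -/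
open MeasureTheory Filter Topology BoundedContinuousFunction NNReal ENNReal

noncomputable section

/-!
By Fubini and the symmetry of the kernel, `∫ U^μ dμ_eq = ∫ U^{μ_eq} dμ = W` for every probability
measure `μ` on `A`, so `min_A U^μ ≤ W`, with equality for `μ_eq`. If `min_A U^μ = W`, then
`U^μ ≥ W` on `A` while its `μ_eq`-average is `W`; since `U^μ` is lower semicontinuous and every
neighbourhood of a point of `A` has positive `μ_eq`-mass, `U^μ = W` on `A`. Hence
`I[μ] = W = I[μ_eq]`, and uniqueness of the energy minimizer gives `μ = μ_eq`.
-/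

section Measures

variable {X : Type*} [MeasurableSpace X] {μ : Measure X} {A : Set X}

theorem lintegral_eq_of_eqOn_of_measure_compl_eq_zero [IsProbabilityMeasure μ]
    (hμA : μ Aᶜ = 0) {g : X → ℝ≥0∞} {c : ℝ≥0∞} (hg : ∀ x ∈ A, g x = c) :
    ∫⁻ x, g x ∂μ = c := by
  have hae : ∀ᵐ x ∂μ, g x = c :=
    measure_mono_null (fun x hx hxA => hx (hg x hxA)) hμA
  rw [lintegral_congr_ae hae, lintegral_const, measure_univ, mul_one]

theorem biInf_le_lintegral_of_measure_compl_eq_zero [IsProbabilityMeasure μ]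
    (hμA : μ Aᶜ = 0) (g : X → ℝ≥0∞) :
    ⨅ x ∈ A, g x ≤ ∫⁻ x, g x ∂μ :=
  calc ⨅ x ∈ A, g x = ∫⁻ _, ⨅ x ∈ A, g x ∂μ := by
        rw [lintegral_const, measure_univ, mul_one]
    _ ≤ ∫⁻ x, g x ∂μ :=
        lintegral_mono_ae <| (measure_eq_zero_iff_ae_notMem.mp hμA).mono
          fun _ hx => biInf_le g (not_not.mp hx)

theorem eqOn_of_le_of_lintegral_eq [TopologicalSpace X] [OpensMeasurableSpace X]
    [IsProbabilityMeasure μ] (hμA : μ Aᶜ = 0)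
    (hsupp : ∀ x ∈ A, ∀ U : Set X, IsOpen U → x ∈ U → 0 < μ U)
    {g : X → ℝ≥0∞} (hg : LowerSemicontinuous g) {c : ℝ≥0∞} (hle : ∀ x ∈ A, c ≤ g x)
    (hint : ∫⁻ x, g x ∂μ = c) :
    ∀ x ∈ A, g x = c := by
  intro x₀ hx₀
  by_contra hne
  obtain ⟨b, hcb, hbg⟩ := exists_between ((hle x₀ hx₀).lt_of_ne' hne)
  obtain ⟨U, hUg, hUopen, hx₀U⟩ := eventually_nhds_iff.mp (hg x₀ b hbg)
  -- `g` dominates `c` plus the bump `(b - c) 𝟙_U`, whose integral is positive.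
  have hbump : ∀ᵐ x ∂μ, c + U.indicator (fun _ => b - c) x ≤ g x := by
    filter_upwards [measure_eq_zero_iff_ae_notMem.mp hμA] with x hxA
    by_cases hxU : x ∈ U
    · rw [Set.indicator_of_mem hxU, add_tsub_cancel_of_le hcb.le]
      exact (hUg x hxU).le
    · rw [Set.indicator_of_notMem hxU, add_zero]
      exact hle x (not_not.mp hxA)
  have hpos : (b - c) * μ U ≠ 0 :=
    mul_ne_zero (tsub_pos_of_lt hcb).ne' (hsupp x₀ hx₀ U hUopen hx₀U).ne'
  refine (ENNReal.lt_add_right (hcb.trans_le le_top).ne hpos).not_ge ?_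
  calc c + (b - c) * μ U = ∫⁻ x, c + U.indicator (fun _ => b - c) x ∂μ := by
        rw [lintegral_add_left measurable_const, lintegral_const, measure_univ, mul_one,
          lintegral_indicator hUopen.measurableSet, setLIntegral_const]
    _ ≤ ∫⁻ x, g x ∂μ := lintegral_mono_ae hbump
    _ = c := hint

end Measures

theorem lowerSemicontinuous_lintegral {X Y : Type*} [TopologicalSpace X]
    [FirstCountableTopology X] [MeasurableSpace Y] (μ : Measure Y) {F : X → Y → ℝ≥0∞}
    (hF : ∀ y, LowerSemicontinuous (F · y)) (hFm : ∀ x, Measurable (F x)) :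
    LowerSemicontinuous fun x => ∫⁻ y, F x y ∂μ :=
  lowerSemicontinuous_iff_le_liminf.2 fun x =>
    (lintegral_mono fun y => (hF y).le_liminf x).trans (lintegral_liminf_le hFm)

section Potential

variable {t : ℕ} {f : ℝ≥0 → ℝ≥0∞}

theorem lowerSemicontinuous_potential (hf : LowerSemicontinuous f)
    (μ : Measure (EuclideanSpace ℝ (Fin t))) :
    LowerSemicontinuous (potential f μ) :=
  lowerSemicontinuous_lintegral μ
    (fun _ => hf.comp (continuous_id.nndist continuous_const))
    (fun _ => hf.measurable.comp (continuous_const.nndist continuous_id).measurable)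

theorem lintegral_potential_comm (hf : LowerSemicontinuous f)
    (μ ν : Measure (EuclideanSpace ℝ (Fin t))) [SFinite μ] [SFinite ν] :
    ∫⁻ x, potential f ν x ∂μ = ∫⁻ y, potential f μ y ∂ν := by
  simp only [potential]
  rw [lintegral_lintegral_swap (f := fun x y => f (nndist x y))
    (hf.measurable.comp continuous_nndist.measurable).aemeasurable]
  simp only [nndist_comm]

end Potential

theorem unique_polarization_extremal_measure_general
    {t : ℕ} (A : Set (EuclideanSpace ℝ (Fin t)))
    (f : ℝ≥0 → ℝ≥0∞) (hf : LowerSemicontinuous f)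
    (μeq : Measure (EuclideanSpace ℝ (Fin t))) (hμeq : IsProbabilityMeasure μeq)
    (hμeqA : μeq Aᶜ = 0)
    (hA2uniq : ∀ ν : Measure (EuclideanSpace ℝ (Fin t)),
      IsProbabilityMeasure ν → ν Aᶜ = 0 → energy f ν = energy f μeq → ν = μeq)
    (hA3 : ∀ x ∈ A, ∀ U : Set (EuclideanSpace ℝ (Fin t)), IsOpen U → x ∈ U → 0 < μeq U)
    (W : ℝ≥0∞) (hA4 : ∀ x ∈ A, potential f μeq x = W) :
    (⨆ (μ : Measure (EuclideanSpace ℝ (Fin t))) (_ : IsProbabilityMeasure μ) (_ : μ Aᶜ = 0),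
      ⨅ x ∈ A, potential f μ x) = W ∧
    ∀ μp : Measure (EuclideanSpace ℝ (Fin t)), IsProbabilityMeasure μp → μp Aᶜ = 0 →
      (⨅ x ∈ A, potential f μp x) = W → μp = μeq := by
  have hAne : A.Nonempty := Set.nonempty_iff_ne_empty.2 fun h => by
    simp [h] at hμeqA
  have haverage : ∀ μ, IsProbabilityMeasure μ → μ Aᶜ = 0 →
      ∫⁻ x, potential f μ x ∂μeq = W := fun μ _ hμA => by
    rw [lintegral_potential_comm hf]
    exact lintegral_eq_of_eqOn_of_measure_compl_eq_zero hμA hA4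
  refine ⟨le_antisymm ?_ ?_, fun μp hμp hμpA hmin => ?_⟩
  · refine iSup_le fun μ => iSup_le fun hμ => iSup_le fun hμA => ?_
    exact (biInf_le_lintegral_of_measure_compl_eq_zero hμeqA _).trans_eq (haverage μ hμ hμA)
  · refine le_iSup_of_le μeq (le_iSup_of_le hμeq (le_iSup_of_le hμeqA ?_))
    rw [iInf_congr fun x => iInf_congr (hA4 x), biInf_const hAne]
  · have hpot : ∀ x ∈ A, potential f μp x = W :=
      eqOn_of_le_of_lintegral_eq hμeqA hA3 (lowerSemicontinuous_potential hf μp)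
        (fun x hx => hmin ▸ biInf_le _ hx) (haverage μp hμp hμpA)
    refine hA2uniq μp hμp hμpA ?_
    rw [energy, energy, lintegral_eq_of_eqOn_of_measure_compl_eq_zero hμpA hpot,
      lintegral_eq_of_eqOn_of_measure_compl_eq_zero hμeqA hA4]

theorem unique_polarization_extremal_measure
    {t : ℕ} (A : Set (EuclideanSpace ℝ (Fin t))) (hA : IsCompact A)
    (f : ℝ≥0 → ℝ≥0∞) (hf : LowerSemicontinuous f)
    (μeq : Measure (EuclideanSpace ℝ (Fin t))) (hμeq : IsProbabilityMeasure μeq)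
    (hμeqA : μeq Aᶜ = 0)
    (hA1 : ∃ μ : Measure (EuclideanSpace ℝ (Fin t)),
      IsProbabilityMeasure μ ∧ μ Aᶜ = 0 ∧ energy f μ < ⊤)
    (hA2min : ∀ ν : Measure (EuclideanSpace ℝ (Fin t)),
      IsProbabilityMeasure ν → ν Aᶜ = 0 → energy f μeq ≤ energy f ν)
    (hA2uniq : ∀ ν : Measure (EuclideanSpace ℝ (Fin t)),
      IsProbabilityMeasure ν → ν Aᶜ = 0 → energy f ν = energy f μeq → ν = μeq)
    (hA3 : ∀ x ∈ A, ∀ U : Set (EuclideanSpace ℝ (Fin t)), IsOpen U → x ∈ U → 0 < μeq U)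
    (W : ℝ≥0∞) (hW : 0 < W) (hA4 : ∀ x ∈ A, potential f μeq x = W) :
    (⨆ (μ : Measure (EuclideanSpace ℝ (Fin t))) (_ : IsProbabilityMeasure μ) (_ : μ Aᶜ = 0),
      ⨅ x ∈ A, potential f μ x) = W ∧
    ∀ μp : Measure (EuclideanSpace ℝ (Fin t)), IsProbabilityMeasure μp → μp Aᶜ = 0 →
      (⨅ x ∈ A, potential f μp x) = W → μp = μeq :=
  unique_polarization_extremal_measure_general A f hf μeq hμeq hμeqA hA2uniq hA3 W hA4
end
end
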